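/- Let p be a prime, and in F_p set x = (1,0,0,0,0,0) and y = (0,1,0,0,0,0). (1) For all α1, α2, β1, β2 ∈ ℤ_p with α1·β2 − α2·β1 ≠ 0, there exists a bijection λ : F_p → F_p with λ(u·v) = λ(u)·λ(v) for all u,v, λ(x) = (α1,α2,0,0,0,0), and λ(y) = (β1,β2,0,0,0,0). (2) Every bijection λ : F_p → F_p with λ(u·v) = λ(u)·λ(v) for all u,v can be written as λ = μ ∘ σ, where σ is a multiplication-preserving bijection of F_p fixing every element whose first two coordinates are zero, and μ is a multiplication-preserving bijection of F_p such that μ(x) and μ(y) have their last four coordinates equal to zero. -/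
import Mathlib

set_option linter.unusedSectionVars false
set_option maxHeartbeats 1600000

/-- The modular overflow indicator `(a,b)_p`. -/
def ovf (p : ℕ) (a b : ZMod p) : ZMod p := if p ≤ a.val + b.val then 1 else 0

/-- The carrier `(ℤ_p)⁶` of the loop `F_p`. -/
abbrev FpCarrier (p : ℕ) := ZMod p × ZMod p × ZMod p × ZMod p × ZMod p × ZMod p

/-- The multiplication of the loop `F_p`. -/
def fpMul (p : ℕ) : FpCarrier p → FpCarrier p → FpCarrier p
  | (a1, a2, a3, a4, a5, a6), (b1, b2, b3, b4, b5, b6) =>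
    (a1 + b1, a2 + b2, a3 + b3 + ovf p a1 b1, a4 + b4 + ovf p a2 b2,
     a5 + b5 - a1 * b1 * (a2 + b2), a6 + b6 + a2 * b2 * (a1 + b1))

/-! ### Basic helpers -/

def ovfN (p : ℕ) (a b : ZMod p) : ℕ := if p ≤ a.val + b.val then 1 else 0

def enc (p : ℕ) (a c : ZMod p) : ZMod (p * p) := ((a.val + p * c.val : ℕ) : ZMod (p * p))
def dig1 (p : ℕ) : ZMod (p * p) →+* ZMod p := ZMod.castHom (dvd_mul_left p p) (ZMod p)
def dig2 (p : ℕ) (n : ZMod (p * p)) : ZMod p := ((n.val / p : ℕ) : ZMod p)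
def phiF (p : ℕ) (t : ZMod p) : ZMod p := ((2 * Nat.choose (t.val + 1) 3 : ℕ) : ZMod p)
def Tp (p : ℕ) : ZMod p := if p = 3 then 2 else 0

def Snat : ℕ → ℕ
  | 0 => 0
  | n+1 => Snat n + n*(n+1)

/-- iterated power (left-iterated product) -/
def pw (p : ℕ) : ℕ → FpCarrier p → FpCarrier p
  | 0, _ => (0, 0, 0, 0, 0, 0)
  | n+1, u => fpMul p (pw p n u) u

/-- the candidate automorphism attached to a matrix `[[α1,β1],[α2,β2]]`. -/
def lamRho (p : ℕ) (α1 α2 β1 β2 : ZMod p) : FpCarrier p → FpCarrier p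
  | (a1, a2, a3, a4, a5, a6) =>
    (dig1 p ((α1.val : ZMod (p*p)) * enc p a1 a3 + (β1.val : ZMod (p*p)) * enc p a2 a4),
     dig1 p ((α2.val : ZMod (p*p)) * enc p a1 a3 + (β2.val : ZMod (p*p)) * enc p a2 a4),
     dig2 p ((α1.val : ZMod (p*p)) * enc p a1 a3 + (β1.val : ZMod (p*p)) * enc p a2 a4),
     dig2 p ((α2.val : ZMod (p*p)) * enc p a1 a3 + (β2.val : ZMod (p*p)) * enc p a2 a4),
     α1*(α1*β2 - α2*β1)*a5 + β1*(α1*β2 - α2*β1)*a6 - α1^2*α2*Tp p*a3 - β1^2*β2*Tp p*a4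
       - α1^2*α2*phiF p a1 - α1*α2*β1*(a1^2*a2) - α1*β1*β2*(a1*a2^2) - β1^2*β2*phiF p a2,
     α2*(α1*β2 - α2*β1)*a5 + β2*(α1*β2 - α2*β1)*a6 + α1*α2^2*Tp p*a3 + β1*β2^2*Tp p*a4
       + α1*α2^2*phiF p a1 + α1*α2*β2*(a1^2*a2) + α2*β1*β2*(a1*a2^2) + β1*β2^2*phiF p a2)

section Main
variable {p : ℕ} [NeZero p]

instance : NeZero (p * p) := ⟨by have := NeZero.ne p; positivity⟩

lemma fpMul_def (u v : FpCarrier p) :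
    fpMul p u v = (u.1 + v.1, u.2.1 + v.2.1, u.2.2.1 + v.2.2.1 + ovf p u.1 v.1,
      u.2.2.2.1 + v.2.2.2.1 + ovf p u.2.1 v.2.1,
      u.2.2.2.2.1 + v.2.2.2.2.1 - u.1 * v.1 * (u.2.1 + v.2.1),
      u.2.2.2.2.2 + v.2.2.2.2.2 + u.2.1 * v.2.1 * (u.1 + v.1)) := by
  obtain ⟨a1, a2, a3, a4, a5, a6⟩ := u
  obtain ⟨b1, b2, b3, b4, b5, b6⟩ := v
  rfl

lemma lamRho_def (α1 α2 β1 β2 : ZMod p) (u : FpCarrier p) :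
    lamRho p α1 α2 β1 β2 u =
    (dig1 p ((α1.val : ZMod (p*p)) * enc p u.1 u.2.2.1 + (β1.val : ZMod (p*p)) * enc p u.2.1 u.2.2.2.1),
     dig1 p ((α2.val : ZMod (p*p)) * enc p u.1 u.2.2.1 + (β2.val : ZMod (p*p)) * enc p u.2.1 u.2.2.2.1),
     dig2 p ((α1.val : ZMod (p*p)) * enc p u.1 u.2.2.1 + (β1.val : ZMod (p*p)) * enc p u.2.1 u.2.2.2.1),
     dig2 p ((α2.val : ZMod (p*p)) * enc p u.1 u.2.2.1 + (β2.val : ZMod (p*p)) * enc p u.2.1 u.2.2.2.1),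
     α1*(α1*β2 - α2*β1)*u.2.2.2.2.1 + β1*(α1*β2 - α2*β1)*u.2.2.2.2.2
       - α1^2*α2*Tp p*u.2.2.1 - β1^2*β2*Tp p*u.2.2.2.1
       - α1^2*α2*phiF p u.1 - α1*α2*β1*(u.1^2*u.2.1) - α1*β1*β2*(u.1*u.2.1^2) - β1^2*β2*phiF p u.2.1,
     α2*(α1*β2 - α2*β1)*u.2.2.2.2.1 + β2*(α1*β2 - α2*β1)*u.2.2.2.2.2
       + α1*α2^2*Tp p*u.2.2.1 + β1*β2^2*Tp p*u.2.2.2.1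
       + α1*α2^2*phiF p u.1 + α1*α2*β2*(u.1^2*u.2.1) + α2*β1*β2*(u.1*u.2.1^2) + β1*β2^2*phiF p u.2.1) := by
  obtain ⟨a1, a2, a3, a4, a5, a6⟩ := u
  rfl

lemma ovf_eq (a b : ZMod p) : ovf p a b = (ovfN p a b : ZMod p) := by
  unfold ovf ovfN; split <;> simp

lemma ovfN_le (a b : ZMod p) : ovfN p a b ≤ 1 := by unfold ovfN; split <;> simp

lemma val_add_ovf (a b : ZMod p) : (a + b).val + p * ovfN p a b = a.val + b.val := by
  have h := ZMod.val_add a b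
  have ha := ZMod.val_lt a
  have hb := ZMod.val_lt b
  unfold ovfN
  split_ifs with hc
  · have : (a.val + b.val) % p = a.val + b.val - p := by
      rw [Nat.mod_eq_sub_mod hc, Nat.mod_eq_of_lt (by omega)]
    omega
  · have : (a.val + b.val) % p = a.val + b.val := Nat.mod_eq_of_lt (by omega)
    omega

lemma ovf_zero_left (a : ZMod p) : ovf p 0 a = 0 := by
  unfold ovf
  rw [ZMod.val_zero]
  rw [if_neg (by simpa using (ZMod.val_lt a).not_ge)]

lemma ovf_zero_right (a : ZMod p) : ovf p a 0 = 0 := by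
  unfold ovf
  rw [ZMod.val_zero]
  rw [if_neg (by simpa using (ZMod.val_lt a).not_ge)]

lemma ovf_assoc (a b c : ZMod p) :
    ovf p b c + ovf p a (b+c) = ovf p a b + ovf p (a+b) c := by
  have key : ovfN p b c + ovfN p a (b+c) = ovfN p a b + ovfN p (a+b) c := by
    have h1 := val_add_ovf b c
    have h2 := val_add_ovf a (b+c)
    have h3 := val_add_ovf a b
    have h4 := val_add_ovf (a+b) c
    have hassoc : (a + (b+c)).val = ((a+b)+c).val := by rw [add_assoc]
    have e1 := ovfN_le b c
    have e2 := ovfN_le a (b+c)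
    have e3 := ovfN_le a b
    have e4 := ovfN_le (a+b) c
    have hp0 := NeZero.pos p
    interval_cases h : ovfN p b c <;> interval_cases h' : ovfN p a (b+c) <;>
      interval_cases h'' : ovfN p a b <;> interval_cases h''' : ovfN p (a+b) c <;> omega
  rw [ovf_eq, ovf_eq, ovf_eq, ovf_eq, ← Nat.cast_add, ← Nat.cast_add, key]

/-! ### digit lemmas -/

lemma dig1_natCast (k : ℕ) : dig1 p (k : ZMod (p*p)) = (k : ZMod p) := map_natCast _ k

lemma enc_val (a c : ZMod p) : (enc p a c).val = a.val + p * c.val := by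
  have ha := ZMod.val_lt a; have hc := ZMod.val_lt c
  unfold enc
  rw [ZMod.val_natCast, Nat.mod_eq_of_lt (by nlinarith)]

lemma dig1_enc (a c : ZMod p) : dig1 p (enc p a c) = a := by
  unfold enc
  rw [dig1_natCast]
  push_cast
  simp [ZMod.natCast_zmod_val, ZMod.natCast_self]

lemma dig2_enc (a c : ZMod p) : dig2 p (enc p a c) = c := by
  have ha := ZMod.val_lt a
  unfold dig2
  rw [enc_val, Nat.add_mul_div_left _ _ (NeZero.pos p), Nat.div_eq_of_lt ha, zero_add,
    ZMod.natCast_zmod_val]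

lemma enc_digs (n : ZMod (p*p)) : enc p (dig1 p (n : ZMod (p*p))) (dig2 p n) = n := by
  have hn : n.val < p * p := ZMod.val_lt n
  have h0 : dig1 p n = ((n.val : ℕ) : ZMod p) := by
    conv_lhs => rw [← ZMod.natCast_zmod_val n]
    exact map_natCast _ _
  have h1 : (dig1 p n).val = n.val % p := by rw [h0, ZMod.val_natCast]
  have h2 : (dig2 p n).val = n.val / p := by
    unfold dig2
    rw [ZMod.val_natCast, Nat.mod_eq_of_lt (Nat.div_lt_of_lt_mul (by linarith))]
  unfold enc
  rw [h1, h2, Nat.mod_add_div, ZMod.natCast_zmod_val]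

lemma enc_inj {a c b d : ZMod p} (h : enc p a c = enc p b d) : a = b ∧ c = d := by
  constructor
  · have := congrArg (dig1 p) h; rwa [dig1_enc, dig1_enc] at this
  · have := congrArg (dig2 p) h; rwa [dig2_enc, dig2_enc] at this

lemma enc_add (a b c d : ZMod p) :
    enc p (a + b) (c + d + ovf p a b) = enc p a c + enc p b d := by
  have key : (a+b).val + p * ((c + d + ovf p a b).val) ≡ (a.val + p * c.val) + (b.val + p * d.val) [MOD p * p] := by
    have h1 : (a+b).val + p * ovfN p a b = a.val + b.val := val_add_ovf a b
    have h2 : (c + d + ovf p a b).val ≡ c.val + d.val + ovfN p a b [MOD p] := by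
      have : ((c + d + ovf p a b).val : ZMod p) = ((c.val + d.val + ovfN p a b : ℕ) : ZMod p) := by
        rw [ZMod.natCast_zmod_val]
        push_cast [ZMod.natCast_zmod_val, ← ovf_eq]
        ring
      rwa [ZMod.natCast_eq_natCast_iff] at this
    have h3 : p * (c + d + ovf p a b).val ≡ p * (c.val + d.val + ovfN p a b) [MOD p * p] :=
      h2.mul_left' p
    calc (a+b).val + p * ((c + d + ovf p a b).val)
        ≡ (a+b).val + p * (c.val + d.val + ovfN p a b) [MOD p*p] := h3.add_left _
      _ = (a.val + p * c.val) + (b.val + p * d.val) := by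
          have := ovfN_le a b
          rw [Nat.mul_add, Nat.mul_add]
          omega
  unfold enc
  rw [← Nat.cast_add, ZMod.natCast_eq_natCast_iff]
  exact key

lemma dig2_add (m n : ZMod (p*p)) :
    dig2 p (m + n) = dig2 p m + dig2 p n + ovf p (dig1 p m) (dig1 p n) := by
  have hm := ZMod.val_lt m; have hn := ZMod.val_lt n
  have hd1 : ∀ k : ZMod (p*p), dig1 p k = ((k.val : ℕ) : ZMod p) := by
    intro k
    conv_lhs => rw [← ZMod.natCast_zmod_val k]
    exact map_natCast _ _
  have hval : (m + n).val = (m.val + n.val) % (p*p) := ZMod.val_add m n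
  have hstep : (((m.val + n.val) % (p*p) / p : ℕ) : ZMod p) = (((m.val + n.val) / p : ℕ) : ZMod p) := by
    rcases Nat.lt_or_ge (m.val + n.val) (p*p) with h | h
    · rw [Nat.mod_eq_of_lt h]
    · have h2 : m.val + n.val < 2 * (p * p) := by omega
      have hmod : (m.val + n.val) % (p*p) = m.val + n.val - p*p := by
        rw [Nat.mod_eq_sub_mod h, Nat.mod_eq_of_lt (by omega)]
      rw [hmod]
      set s := m.val + n.val
      have e1 : s - p*p + p*p = s := by omega
      have e2 : (s - p*p + p*p)/p = (s-p*p)/p + p := Nat.add_mul_div_right (s - p*p) p (NeZero.pos p)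
      have hdiv : s / p = p + (s - p*p) / p := by
        have e3 : s/p = (s-p*p)/p + p := by rw [← e2, e1]
        omega
      rw [hdiv]
      push_cast
      simp
  unfold dig2
  rw [hval, hstep]
  have hadd := Nat.add_div (a := m.val) (b := n.val) (NeZero.pos p)
  rw [hadd]
  rw [hd1 m, hd1 n]
  unfold ovf
  rw [ZMod.val_natCast, ZMod.val_natCast]
  split_ifs with h
  · push_cast; ring
  · push_cast; ring

lemma dig2_natCast_lt {k : ℕ} (hk : k < p) : dig2 p (k : ZMod (p*p)) = 0 := by
  unfold dig2
  rw [ZMod.val_natCast, Nat.mod_eq_of_lt (lt_of_lt_of_le hk (Nat.le_mul_of_pos_left p (NeZero.pos p))), Nat.div_eq_of_lt hk]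
  simp

lemma dig2_pmul (m : ℕ) : dig2 p ((p * m : ℕ) : ZMod (p*p)) = (m : ZMod p) := by
  unfold dig2
  rw [ZMod.val_natCast, Nat.mul_mod_mul_left, Nat.mul_div_cancel_left _ (NeZero.pos p)]
  exact (ZMod.natCast_mod m p) ▸ rfl

/-! ### binomial lemmas -/

lemma choose2 (n : ℕ) : 2 * Nat.choose (n+1) 2 = (n+1)*n := by
  induction n with
  | zero => rfl
  | succ n ih =>
    rw [show n+1+1 = (n+1)+1 from rfl, Nat.choose_succ_succ (n+1) 1, Nat.mul_add, ih,
      Nat.choose_one_right]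
    ring

lemma choose3aux (v w : ℕ) : 2 * Nat.choose (v+w+1) 3 =
    2 * Nat.choose (v+1) 3 + 2 * Nat.choose (w+1) 3 + (v*v*w + v*w*w) := by
  induction w with
  | zero => simp [Nat.choose_eq_zero_of_lt]
  | succ w ih =>
    have h1 : v + (w+1) + 1 = (v+w+1) + 1 := by ring
    rw [h1, Nat.choose_succ_succ (v+w+1) 2, Nat.mul_add, ih,
      show w+1+1 = (w+1)+1 from rfl, Nat.choose_succ_succ (w+1) 2]
    have c1 := choose2 (v+w)
    have c2 := choose2 w
    ring_nf
    ring_nf at c1 c2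
    omega

lemma choose3_closed (n : ℕ) : 6 * Nat.choose (n+2) 3 = n*(n+1)*(n+2) := by
  induction n with
  | zero => rfl
  | succ n ih =>
    rw [show n+1+2 = (n+2)+1 from rfl, Nat.choose_succ_succ (n+2) 2]
    have h2 := choose2 (n+1)
    rw [Nat.mul_add]
    have : 6 * Nat.choose (n+2) 2 = 3 * (2 * Nat.choose (n+2) 2) := by ring
    rw [this, h2, ih]
    ring

lemma Tp_eq (hp : p.Prime) : ((2 * Nat.choose (p+1) 3 : ℕ) : ZMod p) = Tp p := by
  unfold Tp
  split_ifs with h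
  · subst h; decide
  · have h6 : 6 * Nat.choose (p+1) 3 = (p-1)*p*(p+1) := by
      have := choose3_closed (p-1)
      have hp2 : p - 1 + 2 = p + 1 := by have := hp.two_le; omega
      rw [hp2] at this
      rw [this]
      have hp1 : p - 1 + 1 = p := by have := hp.two_le; omega
      rw [hp1]
    have hdvd : p ∣ 3 * (2 * Nat.choose (p+1) 3) := by
      rw [show 3 * (2 * Nat.choose (p+1) 3) = 6 * Nat.choose (p+1) 3 by ring, h6]
      exact Dvd.dvd.mul_right (Dvd.dvd.mul_left dvd_rfl _) _
    have : p ∣ 2 * Nat.choose (p+1) 3 := by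
      rcases (Nat.Prime.dvd_mul hp).mp hdvd with h3 | h'
      · exact absurd ((Nat.prime_dvd_prime_iff_eq hp (by norm_num)).mp h3) h
      · exact h'
    rwa [ZMod.natCast_eq_zero_iff]

lemma snat_closed (n : ℕ) : 3 * Snat (n+1) = n*(n+1)*(n+2) := by
  induction n with
  | zero => rfl
  | succ n ih =>
    show 3 * (Snat (n+1) + (n+1)*(n+2)) = _
    rw [Nat.mul_add, ih]
    ring

lemma Sp_eq (hp : p.Prime) : ((Snat p : ℕ) : ZMod p) = Tp p := by
  unfold Tp
  split_ifs with h
  · subst h; decide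
  · have hp1 : p - 1 + 1 = p := by have := hp.two_le; omega
    have h3 : 3 * Snat p = (p-1)*p*(p+1) := by
      have := snat_closed (p-1)
      rw [hp1] at this
      rw [this]
      have hp2 : p - 1 + 2 = p + 1 := by have := hp.two_le; omega
      rw [hp2]
    have hdvd : p ∣ 3 * Snat p := by
      rw [h3]; exact Dvd.dvd.mul_right (Dvd.dvd.mul_left dvd_rfl _) _
    have : p ∣ Snat p := by
      rcases (Nat.Prime.dvd_mul hp).mp hdvd with h3' | h'
      · exact absurd ((Nat.prime_dvd_prime_iff_eq hp (by norm_num)).mp h3') h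
      · exact h'
    rwa [ZMod.natCast_eq_zero_iff]

lemma phi_add (hp : p.Prime) (a b : ZMod p) :
    phiF p (a + b) = phiF p a + phiF p b + a^2*b + a*b^2 - Tp p * ovf p a b := by
  have hv := val_add_ovf a b
  have hcast : ∀ t : ZMod p, ((t.val : ℕ) : ZMod p) = t := fun t => ZMod.natCast_zmod_val t
  unfold phiF
  rw [ovf_eq]
  unfold ovfN at hv ⊢
  split_ifs with hc
  · rw [if_pos hc] at hv
    have hn : p + (a+b).val = a.val + b.val := by omega
    have h1 := choose3aux p ((a+b).val)
    have h2 := choose3aux a.val b.val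
    rw [hn] at h1
    have h1' : ((2 * Nat.choose (a.val + b.val + 1) 3 : ℕ) : ZMod p)
        = ((2 * Nat.choose (p+1) 3 : ℕ) : ZMod p) + ((2 * Nat.choose ((a+b).val+1) 3 : ℕ) : ZMod p) := by
      rw [h1]; push_cast; simp [ZMod.natCast_self]
    have h2' : ((2 * Nat.choose (a.val + b.val + 1) 3 : ℕ) : ZMod p)
        = ((2 * Nat.choose (a.val+1) 3 : ℕ) : ZMod p) + ((2 * Nat.choose (b.val+1) 3 : ℕ) : ZMod p)
          + a^2*b + a*b^2 := by
      rw [h2]; push_cast [hcast]; ring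
    rw [Tp_eq hp] at h1'
    have := h1'.symm.trans h2'
    linear_combination this
  · rw [if_neg hc] at hv
    have hn : (a+b).val = a.val + b.val := by omega
    have h2 := choose3aux a.val b.val
    rw [← hn] at h2
    rw [h2]
    push_cast [hcast]
    ring

lemma phiF_zero : phiF p 0 = 0 := by
  unfold phiF
  rw [ZMod.val_zero]
  norm_num [Nat.choose_eq_zero_of_lt]

lemma phiF_one : phiF p 1 = 0 := by
  unfold phiF
  have : ((1 : ZMod p).val + 1).choose 3 = 0 := by
    apply Nat.choose_eq_zero_of_lt
    have : (1 : ZMod p).val ≤ 1 := by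
      rcases eq_or_ne p 1 with h | h
      · subst h; simp [ZMod.val_one_eq_one_mod]
      · have h1 : 1 < p := lt_of_le_of_ne (Nat.one_le_iff_ne_zero.mpr (NeZero.ne p)) (Ne.symm h)
        haveI : Fact (1 < p) := ⟨h1⟩
        rw [ZMod.val_one]
    omega
  rw [this]; simp

/-! ### lamRho is a homomorphism -/

lemma dig1_N (x y a b c d : ZMod p) :
    dig1 p ((x.val : ZMod (p*p)) * enc p a c + (y.val : ZMod (p*p)) * enc p b d) = x*a + y*b := by
  rw [map_add, map_mul, map_mul, dig1_natCast, dig1_natCast, dig1_enc, dig1_enc,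
    ZMod.natCast_zmod_val, ZMod.natCast_zmod_val]

lemma lamRho_hom (hp : p.Prime) (α1 α2 β1 β2 : ZMod p) (u v : FpCarrier p) :
    lamRho p α1 α2 β1 β2 (fpMul p u v) = fpMul p (lamRho p α1 α2 β1 β2 u) (lamRho p α1 α2 β1 β2 v) := by
  obtain ⟨a1, a2, a3, a4, a5, a6⟩ := u
  obtain ⟨b1, b2, b3, b4, b5, b6⟩ := v
  have hN1 : (α1.val : ZMod (p*p)) * enc p (a1+b1) (a3+b3+ovf p a1 b1)
      + (β1.val : ZMod (p*p)) * enc p (a2+b2) (a4+b4+ovf p a2 b2)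
      = ((α1.val : ZMod (p*p)) * enc p a1 a3 + (β1.val : ZMod (p*p)) * enc p a2 a4)
      + ((α1.val : ZMod (p*p)) * enc p b1 b3 + (β1.val : ZMod (p*p)) * enc p b2 b4) := by
    rw [enc_add, enc_add]; ring
  have hN2 : (α2.val : ZMod (p*p)) * enc p (a1+b1) (a3+b3+ovf p a1 b1)
      + (β2.val : ZMod (p*p)) * enc p (a2+b2) (a4+b4+ovf p a2 b2)
      = ((α2.val : ZMod (p*p)) * enc p a1 a3 + (β2.val : ZMod (p*p)) * enc p a2 a4)
      + ((α2.val : ZMod (p*p)) * enc p b1 b3 + (β2.val : ZMod (p*p)) * enc p b2 b4) := by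
    rw [enc_add, enc_add]; ring
  show lamRho p α1 α2 β1 β2 (a1+b1, a2+b2, a3+b3+ovf p a1 b1, a4+b4+ovf p a2 b2,
      a5+b5-a1*b1*(a2+b2), a6+b6+a2*b2*(a1+b1)) = _
  simp only [lamRho, fpMul, Prod.mk.injEq]
  rw [hN1, hN2]
  refine ⟨?_, ?_, ?_, ?_, ?_, ?_⟩
  · rw [map_add]
  · rw [map_add]
  · rw [dig2_add]
  · rw [dig2_add]
  · rw [dig1_N, dig1_N, dig1_N, dig1_N, phi_add hp a1 b1, phi_add hp a2 b2]
    ring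
  · rw [dig1_N, dig1_N, dig1_N, dig1_N, phi_add hp a1 b1, phi_add hp a2 b2]
    ring

lemma enc_zero_zero : enc p 0 0 = 0 := by unfold enc; simp

lemma enc_one_zero (h1 : 1 < p) : enc p 1 0 = 1 := by
  haveI : Fact (1 < p) := ⟨h1⟩
  unfold enc
  rw [ZMod.val_one, ZMod.val_zero]
  simp

lemma lamRho_x (hp : p.Prime) (α1 α2 β1 β2 : ZMod p) :
    lamRho p α1 α2 β1 β2 (1, 0, 0, 0, 0, 0) = (α1, α2, 0, 0, 0, 0) := by
  simp only [lamRho, enc_one_zero hp.one_lt, enc_zero_zero, mul_one, mul_zero, add_zero]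
  rw [dig1_natCast, dig1_natCast, ZMod.natCast_zmod_val, ZMod.natCast_zmod_val,
    dig2_natCast_lt (ZMod.val_lt α1), dig2_natCast_lt (ZMod.val_lt α2), phiF_zero, phiF_one]
  norm_num

lemma lamRho_y (hp : p.Prime) (α1 α2 β1 β2 : ZMod p) :
    lamRho p α1 α2 β1 β2 (0, 1, 0, 0, 0, 0) = (β1, β2, 0, 0, 0, 0) := by
  simp only [lamRho, enc_one_zero hp.one_lt, enc_zero_zero, mul_one, mul_zero, zero_add]
  rw [dig1_natCast, dig1_natCast, ZMod.natCast_zmod_val, ZMod.natCast_zmod_val,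
    dig2_natCast_lt (ZMod.val_lt β1), dig2_natCast_lt (ZMod.val_lt β2), phiF_zero, phiF_one]
  norm_num

lemma lamRho_inj (hp : p.Prime) (α1 α2 β1 β2 : ZMod p) (hD : α1*β2 - α2*β1 ≠ 0) :
    Function.Injective (lamRho p α1 α2 β1 β2) := by
  haveI : Fact p.Prime := ⟨hp⟩
  intro u v h
  obtain ⟨a1, a2, a3, a4, a5, a6⟩ := u
  obtain ⟨b1, b2, b3, b4, b5, b6⟩ := v
  simp only [lamRho, Prod.mk.injEq] at h
  obtain ⟨h1, h2, h3, h4, h5, h6⟩ := h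
  -- recover the p²-level equations
  have hM1 : (α1.val : ZMod (p*p)) * enc p a1 a3 + (β1.val : ZMod (p*p)) * enc p a2 a4
      = (α1.val : ZMod (p*p)) * enc p b1 b3 + (β1.val : ZMod (p*p)) * enc p b2 b4 := by
    rw [← enc_digs ((α1.val : ZMod (p*p)) * enc p a1 a3 + (β1.val : ZMod (p*p)) * enc p a2 a4),
      ← enc_digs ((α1.val : ZMod (p*p)) * enc p b1 b3 + (β1.val : ZMod (p*p)) * enc p b2 b4), h1, h3]
  have hM2 : (α2.val : ZMod (p*p)) * enc p a1 a3 + (β2.val : ZMod (p*p)) * enc p a2 a4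
      = (α2.val : ZMod (p*p)) * enc p b1 b3 + (β2.val : ZMod (p*p)) * enc p b2 b4 := by
    rw [← enc_digs ((α2.val : ZMod (p*p)) * enc p a1 a3 + (β2.val : ZMod (p*p)) * enc p a2 a4),
      ← enc_digs ((α2.val : ZMod (p*p)) * enc p b1 b3 + (β2.val : ZMod (p*p)) * enc p b2 b4), h2, h4]
  -- the lifted determinant is a unit
  set Dbar : ZMod (p*p) := (α1.val : ZMod (p*p)) * (β2.val : ZMod (p*p))
      - (α2.val : ZMod (p*p)) * (β1.val : ZMod (p*p)) with hDbar
  have hdig1D : dig1 p Dbar = α1*β2 - α2*β1 := by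
    rw [hDbar, map_sub, map_mul, map_mul, dig1_natCast, dig1_natCast, dig1_natCast, dig1_natCast,
      ZMod.natCast_zmod_val, ZMod.natCast_zmod_val, ZMod.natCast_zmod_val, ZMod.natCast_zmod_val]
  have hDunit : IsUnit Dbar := by
    have hnd : ¬ p ∣ Dbar.val := by
      intro hdvd
      have : ((Dbar.val : ℕ) : ZMod p) = 0 := (ZMod.natCast_eq_zero_iff _ _).mpr hdvd
      have h' : ((Dbar.val : ℕ) : ZMod p) = α1*β2 - α2*β1 := by
        have : dig1 p (((Dbar.val : ℕ) : ZMod (p*p))) = ((Dbar.val : ℕ) : ZMod p) := dig1_natCast _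
        rw [ZMod.natCast_zmod_val] at this
        rw [← this, hdig1D]
      exact hD (by rw [← h', this])
    have hco : Nat.Coprime Dbar.val (p*p) :=
      Nat.Coprime.mul_right ((Nat.Prime.coprime_iff_not_dvd hp).mpr hnd).symm
        ((Nat.Prime.coprime_iff_not_dvd hp).mpr hnd).symm
    have := (ZMod.isUnit_iff_coprime Dbar.val (p*p)).mpr hco
    rwa [ZMod.natCast_zmod_val] at this
  have hE : Dbar * enc p a1 a3 = Dbar * enc p b1 b3 := by
    linear_combination (β2.val : ZMod (p*p)) * hM1 - (β1.val : ZMod (p*p)) * hM2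
  have hF : Dbar * enc p a2 a4 = Dbar * enc p b2 b4 := by
    linear_combination (α1.val : ZMod (p*p)) * hM2 - (α2.val : ZMod (p*p)) * hM1
  have hEa := enc_inj (hDunit.mul_left_cancel hE)
  have hFa := enc_inj (hDunit.mul_left_cancel hF)
  obtain ⟨e1, e3⟩ := hEa
  obtain ⟨e2, e4⟩ := hFa
  subst e1; subst e2; subst e3; subst e4
  -- now coordinates 5,6
  have k5 : (α1*β2-α2*β1) * ((α1*β2-α2*β1) * a5) = (α1*β2-α2*β1) * ((α1*β2-α2*β1) * b5) := by
    linear_combination β2 * h5 - β1 * h6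
  have k6 : (α1*β2-α2*β1) * ((α1*β2-α2*β1) * a6) = (α1*β2-α2*β1) * ((α1*β2-α2*β1) * b6) := by
    linear_combination α1 * h6 - α2 * h5
  have e5 : a5 = b5 := mul_left_cancel₀ hD (mul_left_cancel₀ hD k5)
  have e6 : a6 = b6 := mul_left_cancel₀ hD (mul_left_cancel₀ hD k6)
  rw [e5, e6]

lemma lamRho_bij (hp : p.Prime) (α1 α2 β1 β2 : ZMod p) (hD : α1*β2 - α2*β1 ≠ 0) :
    Function.Bijective (lamRho p α1 α2 β1 β2) :=
  Finite.injective_iff_bijective.mp (lamRho_inj hp α1 α2 β1 β2 hD)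

end Main
section Loop
variable {p : ℕ} [NeZero p]

lemma fpMul_zero_right (u : FpCarrier p) : fpMul p u (0,0,0,0,0,0) = u := by
  obtain ⟨a1, a2, a3, a4, a5, a6⟩ := u
  simp [fpMul, ovf_zero_right]

lemma fpMul_left_cancel {a u v : FpCarrier p} (h : fpMul p a u = fpMul p a v) : u = v := by
  obtain ⟨a1, a2, a3, a4, a5, a6⟩ := a
  obtain ⟨u1, u2, u3, u4, u5, u6⟩ := u
  obtain ⟨v1, v2, v3, v4, v5, v6⟩ := v
  simp only [fpMul, Prod.mk.injEq] at h
  obtain ⟨h1, h2, h3, h4, h5, h6⟩ := h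
  have e1 : u1 = v1 := by exact add_left_cancel h1
  have e2 : u2 = v2 := by exact add_left_cancel h2
  subst e1; subst e2
  simp only [Prod.mk.injEq]
  exact ⟨trivial, trivial, by linear_combination h3, by linear_combination h4,
    by linear_combination h5, by linear_combination h6⟩

/-- associativity defect -/
lemma fpMul_assoc_defect (c a b : FpCarrier p) :
    fpMul p c (fpMul p a b) = fpMul p (fpMul p (fpMul p c a) b)
      (0, 0, 0, 0, a.1*(b.1*c.2.1 - b.2.1*c.1), a.2.1*(b.1*c.2.1 - b.2.1*c.1)) := by
  obtain ⟨c1, c2, c3, c4, c5, c6⟩ := c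
  obtain ⟨a1, a2, a3, a4, a5, a6⟩ := a
  obtain ⟨b1, b2, b3, b4, b5, b6⟩ := b
  simp only [fpMul, Prod.mk.injEq]
  refine ⟨by ring, by ring, ?_, ?_, by ring, by ring⟩
  · rw [ovf_zero_right]
    have := ovf_assoc c1 a1 b1
    linear_combination this
  · rw [ovf_zero_right]
    have := ovf_assoc c2 a2 b2
    linear_combination this

lemma central_fpMul (x3 x4 x5 x6 y3 y4 y5 y6 : ZMod p) :
    fpMul p (0,0,x3,x4,x5,x6) (0,0,y3,y4,y5,y6) = (0,0,x3+y3,x4+y4,x5+y5,x6+y6) := by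
  simp only [fpMul, Prod.mk.injEq, ovf_zero_left]
  refine ⟨by ring, by ring, by ring, by ring, by ring, by ring⟩

lemma central_assoc (c u v : FpCarrier p) (hc1 : c.1 = 0) (hc2 : c.2.1 = 0) :
    fpMul p c (fpMul p u v) = fpMul p (fpMul p c u) v := by
  rw [fpMul_assoc_defect c u v, hc1, hc2]
  simp only [mul_zero, zero_mul, sub_zero, zero_sub, neg_zero, sub_self]
  rw [fpMul_zero_right]

lemma central_left_mul (c u : FpCarrier p) (hc1 : c.1 = 0) (hc2 : c.2.1 = 0) :
    fpMul p c u = (u.1, u.2.1, c.2.2.1 + u.2.2.1, c.2.2.2.1 + u.2.2.2.1,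
      c.2.2.2.2.1 + u.2.2.2.2.1, c.2.2.2.2.2 + u.2.2.2.2.2) := by
  rw [fpMul_def, hc1, hc2]
  simp [ovf_zero_left]

end Loop
section Pow
variable {p : ℕ} [NeZero p]

lemma pw_closed (u : FpCarrier p) (n : ℕ) :
    pw p n u = ((n : ZMod p)*u.1, (n : ZMod p)*u.2.1,
      (n : ZMod p)*u.2.2.1 + ((n * u.1.val / p : ℕ) : ZMod p),
      (n : ZMod p)*u.2.2.2.1 + ((n * u.2.1.val / p : ℕ) : ZMod p),
      (n : ZMod p)*u.2.2.2.2.1 - u.1^2*u.2.1*((Snat n : ℕ) : ZMod p),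
      (n : ZMod p)*u.2.2.2.2.2 + u.1*u.2.1^2*((Snat n : ℕ) : ZMod p)) := by
  induction n with
  | zero =>
    show (0,0,0,0,0,0) = _
    norm_num [Snat]
  | succ n ih =>
    show fpMul p (pw p n u) u = _
    rw [ih, fpMul_def]
    have hcv : ∀ t : ZMod p, ((t.val : ℕ) : ZMod p) = t := fun t => ZMod.natCast_zmod_val t
    have hmulcast : ∀ t : ZMod p, (n : ZMod p) * t = ((n * t.val : ℕ) : ZMod p) := by
      intro t; push_cast [hcv]; ring
    have hdivstep : ∀ t : ZMod p, ((n+1) * t.val) / p = (n * t.val) / p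
        + ovfN p ((n : ZMod p) * t) t := by
      intro t
      have hlt := ZMod.val_lt t
      have : (n+1) * t.val = n * t.val + t.val := by ring
      rw [this, Nat.add_div (NeZero.pos p), Nat.div_eq_of_lt hlt, Nat.mod_eq_of_lt hlt]
      unfold ovfN
      rw [hmulcast t, ZMod.val_natCast]
      omega
    have hovf : ∀ t : ZMod p, ovf p ((n : ZMod p) * t) t = ((ovfN p ((n : ZMod p) * t) t : ℕ) : ZMod p) :=
      fun t => ovf_eq _ _
    simp only [Prod.mk.injEq]
    refine ⟨by push_cast; ring, by push_cast; ring, ?_, ?_, ?_, ?_⟩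
    · rw [hovf u.1, hdivstep u.1]; push_cast; ring
    · rw [hovf u.2.1, hdivstep u.2.1]; push_cast; ring
    · show _ - (n:ZMod p)*u.1 * u.1 * ((n:ZMod p)*u.2.1 + u.2.1) = _
      have hs : Snat (n+1) = Snat n + n*(n+1) := rfl
      rw [hs]; push_cast; ring
    · show _ + (n:ZMod p)*u.2.1 * u.2.1 * ((n:ZMod p)*u.1 + u.1) = _
      have hs : Snat (n+1) = Snat n + n*(n+1) := rfl
      rw [hs]; push_cast; ring

lemma pw_x_val (hp : p.Prime) (a : ZMod p) :
    pw p a.val ((1 : ZMod p), (0:ZMod p), (0:ZMod p), (0:ZMod p), (0:ZMod p), (0:ZMod p)) = (a, 0, 0, 0, 0, 0) := by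
  haveI : Fact (1 < p) := ⟨hp.one_lt⟩
  rw [pw_closed]
  simp only [mul_zero, mul_one, add_zero, zero_add]
  rw [ZMod.val_one, ZMod.val_zero, Nat.mul_one, Nat.mul_zero, Nat.zero_div,
    Nat.div_eq_of_lt (ZMod.val_lt a), ZMod.natCast_zmod_val]
  norm_num

lemma pw_y_val (hp : p.Prime) (a : ZMod p) :
    pw p a.val ((0 : ZMod p), (1:ZMod p), (0:ZMod p), (0:ZMod p), (0:ZMod p), (0:ZMod p)) = (0, a, 0, 0, 0, 0) := by
  haveI : Fact (1 < p) := ⟨hp.one_lt⟩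
  rw [pw_closed]
  simp only [mul_zero, mul_one, add_zero, zero_add]
  rw [ZMod.val_one, ZMod.val_zero, Nat.mul_one, Nat.mul_zero, Nat.zero_div,
    Nat.div_eq_of_lt (ZMod.val_lt a), ZMod.natCast_zmod_val]
  norm_num

lemma pw_x_p (hp : p.Prime) :
    pw p p ((1 : ZMod p), (0:ZMod p), (0:ZMod p), (0:ZMod p), (0:ZMod p), (0:ZMod p))
      = (0, 0, 1, 0, 0, 0) := by
  haveI : Fact (1 < p) := ⟨hp.one_lt⟩
  rw [pw_closed]
  simp only [mul_zero, mul_one, add_zero, zero_add]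
  rw [ZMod.val_one, ZMod.val_zero, Nat.mul_one, Nat.mul_zero, Nat.zero_div,
    Nat.div_self (NeZero.pos p)]
  norm_num [ZMod.natCast_self]

lemma pw_y_p (hp : p.Prime) :
    pw p p ((0 : ZMod p), (1:ZMod p), (0:ZMod p), (0:ZMod p), (0:ZMod p), (0:ZMod p))
      = (0, 0, 0, 1, 0, 0) := by
  haveI : Fact (1 < p) := ⟨hp.one_lt⟩
  rw [pw_closed]
  simp only [mul_zero, mul_one, add_zero, zero_add]
  rw [ZMod.val_one, ZMod.val_zero, Nat.mul_one, Nat.mul_zero, Nat.zero_div,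
    Nat.div_self (NeZero.pos p)]
  norm_num [ZMod.natCast_self]

/-- `u^p` for arbitrary `u` -/
lemma pw_p (hp : p.Prime) (u : FpCarrier p) :
    pw p p u = (0, 0, u.1, u.2.1, -u.1^2*u.2.1*Tp p, u.1*u.2.1^2*Tp p) := by
  rw [pw_closed]
  rw [ZMod.natCast_self, Sp_eq hp]
  have h1 : (p * u.1.val / p : ℕ) = u.1.val := Nat.mul_div_cancel_left _ (NeZero.pos p)
  have h2 : (p * u.2.1.val / p : ℕ) = u.2.1.val := Nat.mul_div_cancel_left _ (NeZero.pos p)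
  rw [h1, h2, ZMod.natCast_zmod_val, ZMod.natCast_zmod_val]
  simp only [Prod.mk.injEq]
  exact ⟨by ring, by ring, by ring, by ring, by ring, by ring⟩

lemma decomp (hp : p.Prime) (u : FpCarrier p) :
    u = fpMul p (fpMul p (u.1,0,0,0,0,0) (0,u.2.1,0,0,0,0))
        (0,0,u.2.2.1,u.2.2.2.1,u.2.2.2.2.1,u.2.2.2.2.2) := by
  obtain ⟨a1, a2, a3, a4, a5, a6⟩ := u
  simp only [fpMul, ovf_zero_left, ovf_zero_right, Prod.mk.injEq]
  norm_num

end Pow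
section Cen
variable {p : ℕ} [NeZero p]

/-- detect centrality from two associativity instances -/
lemma cen_detect (W : FpCarrier p)
    (hX : fpMul p W (fpMul p ((1:ZMod p),(0:ZMod p),(0:ZMod p),(0:ZMod p),(0:ZMod p),(0:ZMod p))
            ((1:ZMod p),(0:ZMod p),(0:ZMod p),(0:ZMod p),(0:ZMod p),(0:ZMod p)))
          = fpMul p (fpMul p W ((1:ZMod p),(0:ZMod p),(0:ZMod p),(0:ZMod p),(0:ZMod p),(0:ZMod p)))
            ((1:ZMod p),(0:ZMod p),(0:ZMod p),(0:ZMod p),(0:ZMod p),(0:ZMod p)))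
    (hY : fpMul p W (fpMul p ((0:ZMod p),(1:ZMod p),(0:ZMod p),(0:ZMod p),(0:ZMod p),(0:ZMod p))
            ((0:ZMod p),(1:ZMod p),(0:ZMod p),(0:ZMod p),(0:ZMod p),(0:ZMod p)))
          = fpMul p (fpMul p W ((0:ZMod p),(1:ZMod p),(0:ZMod p),(0:ZMod p),(0:ZMod p),(0:ZMod p)))
            ((0:ZMod p),(1:ZMod p),(0:ZMod p),(0:ZMod p),(0:ZMod p),(0:ZMod p))) :
    W.1 = 0 ∧ W.2.1 = 0 := by
  obtain ⟨w1, w2, w3, w4, w5, w6⟩ := W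
  simp only [fpMul, Prod.mk.injEq] at hX hY
  constructor
  · have h6 := hY.2.2.2.2.2
    linear_combination -h6
  · have h5 := hX.2.2.2.2.1
    linear_combination h5

lemma lamRho_central (α1 α2 β1 β2 c3 c4 c5 c6 : ZMod p) :
    lamRho p α1 α2 β1 β2 (0,0,c3,c4,c5,c6) =
      (0, 0, c3*α1 + c4*β1, c3*α2 + c4*β2,
       c5*(α1*(α1*β2-α2*β1)) + c6*(β1*(α1*β2-α2*β1)) - c3*(α1^2*α2*Tp p) - c4*(β1^2*β2*Tp p),
       c5*(α2*(α1*β2-α2*β1)) + c6*(β2*(α1*β2-α2*β1)) + c3*(α1*α2^2*Tp p) + c4*(β1*β2^2*Tp p)) := by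
  have hN : ∀ x y : ZMod p, (x.val : ZMod (p*p)) * enc p 0 c3 + (y.val : ZMod (p*p)) * enc p 0 c4
      = ((p*(x.val*c3.val + y.val*c4.val) : ℕ) : ZMod (p*p)) := by
    intro x y
    unfold enc
    rw [ZMod.val_zero]
    push_cast
    ring
  have hd1 : ∀ x y : ZMod p,
      dig1 p ((x.val : ZMod (p*p)) * enc p 0 c3 + (y.val : ZMod (p*p)) * enc p 0 c4) = 0 := by
    intro x y
    rw [hN, dig1_natCast]
    push_cast [ZMod.natCast_self]
    ring
  have hd2 : ∀ x y : ZMod p,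
      dig2 p ((x.val : ZMod (p*p)) * enc p 0 c3 + (y.val : ZMod (p*p)) * enc p 0 c4)
        = c3*x + c4*y := by
    intro x y
    rw [hN, dig2_pmul]
    push_cast [ZMod.natCast_zmod_val]
    ring
  simp only [lamRho]
  rw [hd1 α1 β1, hd1 α2 β2, hd2 α1 β1, hd2 α2 β2, phiF_zero]
  simp only [Prod.mk.injEq]
  refine ⟨trivial, trivial, trivial, trivial, by ring, by ring⟩

lemma tuple_eta (w : FpCarrier p) (h1 : w.1 = 0) (h2 : w.2.1 = 0) :
    w = ((0:ZMod p), (0:ZMod p), w.2.2.1, w.2.2.2.1, w.2.2.2.2.1, w.2.2.2.2.2) := by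
  obtain ⟨a,b,c,d,e,f⟩ := w
  simp only at h1 h2
  subst h1; subst h2
  rfl

end Cen
lemma part2 (p : ℕ) (hp : p.Prime) (lam : FpCarrier p → FpCarrier p)
    (hbij : Function.Bijective lam)
    (hhom : ∀ u v, lam (fpMul p u v) = fpMul p (lam u) (lam v)) :
    ∃ mu sigma : FpCarrier p → FpCarrier p,
      Function.Bijective mu ∧
      (∀ u v, mu (fpMul p u v) = fpMul p (mu u) (mu v)) ∧
      Function.Bijective sigma ∧
      (∀ u v, sigma (fpMul p u v) = fpMul p (sigma u) (sigma v)) ∧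
      lam = mu ∘ sigma ∧
      (∀ z : FpCarrier p, z.1 = 0 → z.2.1 = 0 → sigma z = z) ∧
      (mu (1, 0, 0, 0, 0, 0)).2.2 = ((0 : ZMod p), (0 : ZMod p), (0 : ZMod p), (0 : ZMod p)) ∧
      (mu (0, 1, 0, 0, 0, 0)).2.2 = ((0 : ZMod p), (0 : ZMod p), (0 : ZMod p), (0 : ZMod p)) := by
  haveI : NeZero p := ⟨hp.pos.ne'⟩
  haveI : Fact p.Prime := ⟨hp⟩
  set X : FpCarrier p := ((1:ZMod p),(0:ZMod p),(0:ZMod p),(0:ZMod p),(0:ZMod p),(0:ZMod p)) with hXdef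
  set Y : FpCarrier p := ((0:ZMod p),(1:ZMod p),(0:ZMod p),(0:ZMod p),(0:ZMod p),(0:ZMod p)) with hYdef
  set A1 := (lam X).1 with hA1
  set A2 := (lam X).2.1 with hA2
  set B1 := (lam Y).1 with hB1
  set B2 := (lam Y).2.1 with hB2
  -- lam preserves the identity
  have lam_one : lam (0,0,0,0,0,0) = ((0:ZMod p),(0:ZMod p),(0:ZMod p),(0:ZMod p),(0:ZMod p),(0:ZMod p)) := by
    have h0 : fpMul p ((0:ZMod p),(0:ZMod p),(0:ZMod p),(0:ZMod p),(0:ZMod p),(0:ZMod p)) (0,0,0,0,0,0)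
        = ((0:ZMod p),(0:ZMod p),(0:ZMod p),(0:ZMod p),(0:ZMod p),(0:ZMod p)) :=
      fpMul_zero_right _
    have h1 := hhom (0,0,0,0,0,0) (0,0,0,0,0,0)
    rw [h0] at h1
    have h2 : fpMul p (lam (0,0,0,0,0,0)) (0,0,0,0,0,0) = fpMul p (lam (0,0,0,0,0,0)) (lam (0,0,0,0,0,0)) := by
      rw [fpMul_zero_right]; exact h1
    exact (fpMul_left_cancel h2).symm
  -- lam preserves the centre
  have lam_cen : ∀ z : FpCarrier p, z.1 = 0 → z.2.1 = 0 → (lam z).1 = 0 ∧ (lam z).2.1 = 0 := by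
    intro z hz1 hz2
    have claim : ∀ w : FpCarrier p, fpMul p (lam z) (fpMul p w w) = fpMul p (fpMul p (lam z) w) w := by
      intro w
      obtain ⟨w', hw'⟩ := hbij.2 w
      calc fpMul p (lam z) (fpMul p w w)
          = fpMul p (lam z) (fpMul p (lam w') (lam w')) := by rw [hw']
        _ = lam (fpMul p z (fpMul p w' w')) := by rw [hhom, hhom]
        _ = lam (fpMul p (fpMul p z w') w') := by rw [central_assoc z w' w' hz1 hz2]
        _ = fpMul p (fpMul p (lam z) w) w := by rw [hhom, hhom, hw']
    exact cen_detect (lam z) (claim X) (claim Y)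
  -- lam commutes with powers
  have lam_pw : ∀ (n : ℕ) (u : FpCarrier p), lam (pw p n u) = pw p n (lam u) := by
    intro n u
    induction n with
    | zero => exact lam_one
    | succ n ih => show lam (fpMul p (pw p n u) u) = fpMul p (pw p n (lam u)) (lam u); rw [hhom, ih]
  -- images of the central generators
  have he3 : lam (0,0,1,0,0,0) = ((0:ZMod p), (0:ZMod p), A1, A2, -A1^2*A2*Tp p, A1*A2^2*Tp p) := by
    have h := lam_pw p X
    rw [hXdef] at h
    rw [pw_x_p hp] at h
    rw [h, pw_p hp]
  have he4 : lam (0,0,0,1,0,0) = ((0:ZMod p), (0:ZMod p), B1, B2, -B1^2*B2*Tp p, B1*B2^2*Tp p) := by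
    have h := lam_pw p Y
    rw [hYdef] at h
    rw [pw_y_p hp] at h
    rw [h, pw_p hp]
  -- image of e5
  have he5 : lam (0,0,0,0,1,0) = ((0:ZMod p), (0:ZMod p), 0, 0, A1*(A1*B2 - A2*B1), A2*(A1*B2 - A2*B1)) := by
    have key : fpMul p Y (fpMul p X X)
        = fpMul p (fpMul p (fpMul p Y X) X) (0,0,0,0,1,0) := by
      have h := fpMul_assoc_defect (p := p) Y X X
      rw [hXdef, hYdef] at h ⊢
      simpa using h
    have key' : fpMul p (lam Y) (fpMul p (lam X) (lam X))
        = fpMul p (fpMul p (fpMul p (lam Y) (lam X)) (lam X))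
          (0,0,0,0, A1*(A1*B2 - A2*B1), A2*(A1*B2 - A2*B1)) := by
      have h := fpMul_assoc_defect (p := p) (lam Y) (lam X) (lam X)
      exact h
    have h1 := congrArg lam key
    rw [hhom, hhom, hhom, hhom, hhom] at h1
    rw [key'] at h1
    exact (fpMul_left_cancel h1.symm)
  -- image of -e6
  have hne6 : lam (0,0,0,0,0,-1) = ((0:ZMod p), (0:ZMod p), 0, 0, B1*(B1*A2 - B2*A1), B2*(B1*A2 - B2*A1)) := by
    have key : fpMul p X (fpMul p Y Y)
        = fpMul p (fpMul p (fpMul p X Y) Y) (0,0,0,0,0,-1) := by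
      have h := fpMul_assoc_defect (p := p) X Y Y
      rw [hXdef, hYdef] at h ⊢
      simpa using h
    have key' : fpMul p (lam X) (fpMul p (lam Y) (lam Y))
        = fpMul p (fpMul p (fpMul p (lam X) (lam Y)) (lam Y))
          (0,0,0,0, B1*(B1*A2 - B2*A1), B2*(B1*A2 - B2*A1)) := by
      have h := fpMul_assoc_defect (p := p) (lam X) (lam Y) (lam Y)
      exact h
    have h1 := congrArg lam key
    rw [hhom, hhom, hhom, hhom, hhom] at h1
    rw [key'] at h1
    exact (fpMul_left_cancel h1.symm)
  -- image of e6
  have he6 : lam (0,0,0,0,0,1) = ((0:ZMod p), (0:ZMod p), 0, 0, B1*(A1*B2 - A2*B1), B2*(A1*B2 - A2*B1)) := by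
    have hmulz : fpMul p ((0:ZMod p),(0:ZMod p),(0:ZMod p),(0:ZMod p),(0:ZMod p),(-1:ZMod p)) (0,0,0,0,0,1)
        = ((0:ZMod p),(0:ZMod p),(0:ZMod p),(0:ZMod p),(0:ZMod p),(0:ZMod p)) := by
      rw [central_fpMul]; norm_num
    have h1 := hhom ((0:ZMod p),(0:ZMod p),(0:ZMod p),(0:ZMod p),(0:ZMod p),(-1:ZMod p)) (0,0,0,0,0,1)
    rw [hmulz, lam_one, hne6] at h1
    -- h1 : 0 = fpMul (tuple) (lam e6)
    have hc := lam_cen (0,0,0,0,0,1) rfl rfl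
    have hw : lam (0,0,0,0,0,1) = ((0:ZMod p), (0:ZMod p), (lam (0,0,0,0,0,1)).2.2.1,
        (lam (0,0,0,0,0,1)).2.2.2.1, (lam (0,0,0,0,0,1)).2.2.2.2.1, (lam (0,0,0,0,0,1)).2.2.2.2.2) :=
      tuple_eta _ hc.1 hc.2
    rw [hw] at h1 ⊢
    rw [central_fpMul] at h1
    simp only [Prod.mk.injEq] at h1 ⊢
    obtain ⟨-, -, h3, h4, h5, h6⟩ := h1
    exact ⟨trivial, trivial, by linear_combination -h3, by linear_combination -h4,
      by linear_combination -h5, by linear_combination -h6⟩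
  -- scalar multiples on the centre
  have lam_csmul : ∀ z3 z4 z5 z6 w3 w4 w5 w6 : ZMod p,
      lam (0,0,z3,z4,z5,z6) = (0,0,w3,w4,w5,w6) → ∀ n : ℕ,
      lam (0,0,(n:ZMod p)*z3,(n:ZMod p)*z4,(n:ZMod p)*z5,(n:ZMod p)*z6)
        = (0,0,(n:ZMod p)*w3,(n:ZMod p)*w4,(n:ZMod p)*w5,(n:ZMod p)*w6) := by
    intro z3 z4 z5 z6 w3 w4 w5 w6 hw n
    induction n with
    | zero => push_cast; simp only [zero_mul]; exact lam_one
    | succ n ih =>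
      have harg : ((0:ZMod p),(0:ZMod p),((n+1:ℕ):ZMod p)*z3,((n+1:ℕ):ZMod p)*z4,((n+1:ℕ):ZMod p)*z5,((n+1:ℕ):ZMod p)*z6)
          = fpMul p (0,0,(n:ZMod p)*z3,(n:ZMod p)*z4,(n:ZMod p)*z5,(n:ZMod p)*z6) (0,0,z3,z4,z5,z6) := by
        rw [central_fpMul]
        simp only [Prod.mk.injEq]
        refine ⟨trivial, trivial, by push_cast; ring, by push_cast; ring, by push_cast; ring, by push_cast; ring⟩
      rw [harg, hhom, ih, hw, central_fpMul]
      simp only [Prod.mk.injEq]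
      refine ⟨trivial, trivial, by push_cast; ring, by push_cast; ring, by push_cast; ring, by push_cast; ring⟩
  -- the action of lam on the centre
  have lam_central : ∀ c3 c4 c5 c6 : ZMod p,
      lam (0,0,c3,c4,c5,c6) =
        (0, 0, c3*A1 + c4*B1, c3*A2 + c4*B2,
         c5*(A1*(A1*B2-A2*B1)) + c6*(B1*(A1*B2-A2*B1)) - c3*(A1^2*A2*Tp p) - c4*(B1^2*B2*Tp p),
         c5*(A2*(A1*B2-A2*B1)) + c6*(B2*(A1*B2-A2*B1)) + c3*(A1*A2^2*Tp p) + c4*(B1*B2^2*Tp p)) := by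
    intro c3 c4 c5 c6
    have hv : ∀ t : ZMod p, ((t.val : ℕ) : ZMod p) = t := fun t => ZMod.natCast_zmod_val t
    have P3 : lam (0,0,c3,0,0,0) = (0,0,c3*A1,c3*A2,c3*(-A1^2*A2*Tp p),c3*(A1*A2^2*Tp p)) := by
      have h := lam_csmul 1 0 0 0 A1 A2 (-A1^2*A2*Tp p) (A1*A2^2*Tp p) he3 c3.val
      simp only [mul_one, mul_zero] at h
      rw [hv c3] at h
      rw [h]
    have P4 : lam (0,0,0,c4,0,0) = (0,0,c4*B1,c4*B2,c4*(-B1^2*B2*Tp p),c4*(B1*B2^2*Tp p)) := by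
      have h := lam_csmul 0 1 0 0 B1 B2 (-B1^2*B2*Tp p) (B1*B2^2*Tp p) he4 c4.val
      simp only [mul_one, mul_zero] at h
      rw [hv c4] at h
      rw [h]
    have P5 : lam (0,0,0,0,c5,0) = (0,0,0,0,c5*(A1*(A1*B2-A2*B1)),c5*(A2*(A1*B2-A2*B1))) := by
      have h := lam_csmul 0 0 1 0 0 0 (A1*(A1*B2-A2*B1)) (A2*(A1*B2-A2*B1)) he5 c5.val
      simp only [mul_one, mul_zero] at h
      rw [hv c5] at h
      rw [h]
    have P6 : lam (0,0,0,0,0,c6) = (0,0,0,0,c6*(B1*(A1*B2-A2*B1)),c6*(B2*(A1*B2-A2*B1))) := by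
      have h := lam_csmul 0 0 0 1 0 0 (B1*(A1*B2-A2*B1)) (B2*(A1*B2-A2*B1)) he6 c6.val
      simp only [mul_one, mul_zero] at h
      rw [hv c6] at h
      rw [h]
    have hsplit : ((0:ZMod p),(0:ZMod p),c3,c4,c5,c6)
        = fpMul p (fpMul p ((0:ZMod p),(0:ZMod p),c3,(0:ZMod p),(0:ZMod p),(0:ZMod p)) (0,0,0,c4,0,0))
            (fpMul p ((0:ZMod p),(0:ZMod p),(0:ZMod p),(0:ZMod p),c5,(0:ZMod p)) (0,0,0,0,0,c6)) := by
      rw [central_fpMul, central_fpMul, central_fpMul]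
      simp only [Prod.mk.injEq]
      refine ⟨trivial, trivial, by ring, by ring, by ring, by ring⟩
    rw [hsplit, hhom, hhom, hhom, P3, P4, P5, P6, central_fpMul, central_fpMul, central_fpMul]
    simp only [Prod.mk.injEq]
    refine ⟨trivial, trivial, by ring, by ring, by ring, by ring⟩
  -- first two coordinates of lam are linear
  have pi_lam : ∀ u : FpCarrier p,
      (lam u).1 = u.1*A1 + u.2.1*B1 ∧ (lam u).2.1 = u.1*A2 + u.2.1*B2 := by
    intro u
    have hd := decomp hp u
    have hx := pw_x_val hp u.1
    have hy := pw_y_val hp u.2.1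
    have hu : lam u = fpMul p (fpMul p (pw p u.1.val (lam X)) (pw p u.2.1.val (lam Y)))
        (lam (0,0,u.2.2.1,u.2.2.2.1,u.2.2.2.2.1,u.2.2.2.2.2)) := by
      conv_lhs => rw [hd]
      rw [hhom, hhom, ← hx, ← hy, lam_pw, lam_pw, hXdef, hYdef]
    have hzc := lam_cen (0,0,u.2.2.1,u.2.2.2.1,u.2.2.2.2.1,u.2.2.2.2.2) rfl rfl
    have hv : ∀ t : ZMod p, ((t.val : ℕ) : ZMod p) = t := fun t => ZMod.natCast_zmod_val t
    constructor
    · rw [hu, fpMul_def, fpMul_def]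
      simp only []
      rw [pw_closed, pw_closed]
      simp only []
      rw [hzc.1, hv, hv]
      ring
    · rw [hu, fpMul_def, fpMul_def]
      simp only []
      rw [pw_closed, pw_closed]
      simp only []
      rw [hzc.2, hv, hv]
      ring
  -- the determinant is nonzero
  have hDl : A1*B2 - A2*B1 ≠ 0 := by
    obtain ⟨u, hu⟩ := hbij.2 X
    obtain ⟨v, hv⟩ := hbij.2 Y
    have e1 : u.1*A1 + u.2.1*B1 = 1 := by
      have := (pi_lam u).1; rw [hu, hXdef] at this; exact this.symm
    have e2 : u.1*A2 + u.2.1*B2 = 0 := by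
      have := (pi_lam u).2; rw [hu, hXdef] at this; exact this.symm
    have e3 : v.1*A1 + v.2.1*B1 = 0 := by
      have := (pi_lam v).1; rw [hv, hYdef] at this; exact this.symm
    have e4 : v.1*A2 + v.2.1*B2 = 1 := by
      have := (pi_lam v).2; rw [hv, hYdef] at this; exact this.symm
    intro h0
    have key : (A1*B2 - A2*B1) * (u.1*v.2.1 - u.2.1*v.1) = 1 := by
      linear_combination (v.1*A2 + v.2.1*B2) * e1 - (v.1*A1 + v.2.1*B1) * e2 + e4
    rw [h0, zero_mul] at key
    exact zero_ne_one key
  -- assemble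
  have hmubij : Function.Bijective (lamRho p A1 A2 B1 B2) := lamRho_bij hp A1 A2 B1 B2 hDl
  have hmuhom : ∀ u v, lamRho p A1 A2 B1 B2 (fpMul p u v)
      = fpMul p (lamRho p A1 A2 B1 B2 u) (lamRho p A1 A2 B1 B2 v) :=
    fun u v => lamRho_hom hp A1 A2 B1 B2 u v
  set e := Equiv.ofBijective (lamRho p A1 A2 B1 B2) hmubij with he
  have hee : ∀ w, lamRho p A1 A2 B1 B2 (e.symm w) = w := fun w => e.apply_symm_apply w
  refine ⟨lamRho p A1 A2 B1 B2, fun u => e.symm (lam u), hmubij, hmuhom, ?_, ?_, ?_, ?_, ?_, ?_⟩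
  · exact (e.symm.bijective).comp hbij
  · intro u v
    apply e.injective
    show lamRho p A1 A2 B1 B2 (e.symm (lam (fpMul p u v)))
      = lamRho p A1 A2 B1 B2 (fpMul p (e.symm (lam u)) (e.symm (lam v)))
    rw [hee, hmuhom, hee, hee, hhom]
  · funext u
    show lam u = lamRho p A1 A2 B1 B2 (e.symm (lam u))
    rw [hee]
  · intro z hz1 hz2
    have hmuz : lamRho p A1 A2 B1 B2 z = lam z := by
      conv_lhs => rw [tuple_eta z hz1 hz2]
      conv_rhs => rw [tuple_eta z hz1 hz2]
      rw [lamRho_central, lam_central]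
    show e.symm (lam z) = z
    rw [← hmuz]
    exact e.symm_apply_apply z
  · rw [hXdef, lamRho_x hp]
  · rw [hYdef, lamRho_y hp]

/-- (1) Every `ρ ∈ GL_2(p)` induces an automorphism of `F_p` sending
`x ↦ (α1,α2,0,0,0,0)`, `y ↦ (β1,β2,0,0,0,0)`.
(2) Every automorphism `λ` of `F_p` factors as `λ = μ ∘ σ`, where `σ` is an
automorphism fixing the center pointwise and `μ` is an automorphism such that
`μ(x)` and `μ(y)` have their last four coordinates zero. -/
theorem stmt_12 (p : ℕ) (hp : p.Prime) :
    (∀ α1 α2 β1 β2 : ZMod p, α1 * β2 - α2 * β1 ≠ 0 →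
      ∃ lam : FpCarrier p → FpCarrier p,
        Function.Bijective lam ∧
        (∀ u v, lam (fpMul p u v) = fpMul p (lam u) (lam v)) ∧
        lam (1, 0, 0, 0, 0, 0) = (α1, α2, 0, 0, 0, 0) ∧
        lam (0, 1, 0, 0, 0, 0) = (β1, β2, 0, 0, 0, 0)) ∧
    (∀ lam : FpCarrier p → FpCarrier p,
      Function.Bijective lam →
      (∀ u v, lam (fpMul p u v) = fpMul p (lam u) (lam v)) →
      ∃ mu sigma : FpCarrier p → FpCarrier p,
        Function.Bijective mu ∧
        (∀ u v, mu (fpMul p u v) = fpMul p (mu u) (mu v)) ∧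
        Function.Bijective sigma ∧
        (∀ u v, sigma (fpMul p u v) = fpMul p (sigma u) (sigma v)) ∧
        lam = mu ∘ sigma ∧
        (∀ z : FpCarrier p, z.1 = 0 → z.2.1 = 0 → sigma z = z) ∧
        (mu (1, 0, 0, 0, 0, 0)).2.2 = ((0 : ZMod p), (0 : ZMod p), (0 : ZMod p), (0 : ZMod p)) ∧
        (mu (0, 1, 0, 0, 0, 0)).2.2 = ((0 : ZMod p), (0 : ZMod p), (0 : ZMod p), (0 : ZMod p))) := by
  haveI : NeZero p := ⟨hp.pos.ne'⟩
  constructor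
  · intro α1 α2 β1 β2 hD
    exact ⟨lamRho p α1 α2 β1 β2, lamRho_bij hp α1 α2 β1 β2 hD, lamRho_hom hp α1 α2 β1 β2,
      lamRho_x hp α1 α2 β1 β2, lamRho_y hp α1 α2 β1 β2⟩
  · intro lam hbij hhom
    exact part2 p hp lam hbij hhom
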